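/- Let (Z_ℓ)_{ℓ≥1} be independent Poisson random variables with E[Z_ℓ] = 1/ℓ. There exist absolute constants c, C > 0 such that for every real M ≥ 1, P( sup_{t ∈ [0,1)} Σ_{1 ≤ ℓ ≤ M} Z_ℓ·log|1 − e(ℓt)| ≤ 3·log M ) ≥ 1 − C·M^{−c}. -/

import Mathlib

/-!
Since `|1 - e(u)| ≤ 2`, each summand is at most `Z_ℓ log 2`, so the supremum over `t` is at most
`log 2 · S` with `S = Σ_{ℓ ≤ M} Z_ℓ`. A Chernoff bound at `t = log 2` uses
`E[2^S] = Π_ℓ exp(1/ℓ) = exp(H_⌊M⌋) ≤ e·M`, giving `P(S log 2 ≥ 3 log M) ≤ M^{-3}·e·M = e·M^{-2}`.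
-/

open MeasureTheory ProbabilityTheory Finset

/-- `e(t) = exp(2πit)`. -/
noncomputable def ec (t : ℝ) : ℂ := Complex.exp (2 * Real.pi * Complex.I * t)

/-- Extended-real logarithm with `log 0 = -∞`. -/
noncomputable def elog (x : ℝ) : EReal := if x = 0 then ⊥ else ((Real.log x : ℝ) : EReal)

/-- The Poisson field `Y_J(t) = Σ_{ℓ ∈ J} Z_ℓ log|1 - e(ℓt)| ∈ [-∞,∞)`. -/
noncomputable def Yfield (J : Finset ℕ) (Zω : ℕ → ℕ) (t : ℝ) : EReal :=
  ∑ ℓ ∈ J, ((Zω ℓ : ℝ) : EReal) * elog ‖1 - ec ((ℓ : ℝ) * t)‖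

open Real
open scoped NNReal

lemma EReal.coe_finset_sum {ι : Type*} (s : Finset ι) (f : ι → ℝ) :
    ((∑ i ∈ s, f i : ℝ) : EReal) = ∑ i ∈ s, (f i : EReal) :=
  map_sum (⟨⟨((↑) : ℝ → EReal), EReal.coe_zero⟩, EReal.coe_add⟩ : ℝ →+ EReal) f s

namespace ProbabilityTheory

set_option linter.deprecated false in
lemma toMeasure_poissonPMF (r : ℝ≥0) : (poissonPMF r).toMeasure = poissonMeasure r := by
  refine Measure.ext_iff_singleton.2 fun n => ?_
  rw [PMF.toMeasure_apply_singleton _ _ (measurableSet_singleton n), poissonMeasure_singleton]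
  rfl

lemma hasSum_poissonMeasure_mul_exp (r : ℝ≥0) (t : ℝ) :
    HasSum (fun n : ℕ ↦ exp (-r) * r ^ n / n.factorial * exp (t * n)) (exp (r * (exp t - 1))) := by
  have h := (NormedSpace.expSeries_div_hasSum_exp (r * exp t : ℝ)).mul_left (exp (-r))
  rw [← exp_eq_exp_ℝ, ← exp_add] at h
  have hterm : (fun n : ℕ ↦ exp (-r) * r ^ n / n.factorial * exp (t * n)) =
      fun n ↦ exp (-r) * ((r * exp t) ^ n / n.factorial) := by
    ext n
    rw [mul_pow, ← exp_nat_mul, mul_comm (n : ℝ) t]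
    ring
  rwa [hterm, show (r : ℝ) * (exp t - 1) = -r + r * exp t by ring]

lemma integrable_exp_mul_poissonMeasure (r : ℝ≥0) (t : ℝ) :
    Integrable (fun n : ℕ ↦ exp (t * n)) (poissonMeasure r) := by
  refine integrable_poissonMeasure_iff.2 ?_
  simpa only [norm_of_nonneg (exp_nonneg _)] using (hasSum_poissonMeasure_mul_exp r t).summable

lemma integral_exp_mul_poissonMeasure (r : ℝ≥0) (t : ℝ) :
    ∫ n : ℕ, exp (t * n) ∂(poissonMeasure r) = exp (r * (exp t - 1)) := by
  rw [integral_poissonMeasure]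
  exact (hasSum_poissonMeasure_mul_exp r t).tsum_eq

variable {Ω : Type*} [MeasurableSpace Ω] {μ : Measure Ω}

lemma integrable_exp_mul_of_map_eq_poissonMeasure {X : Ω → ℕ} (hX : Measurable X) {r : ℝ≥0}
    (hlaw : μ.map X = poissonMeasure r) (t : ℝ) :
    Integrable (fun ω ↦ exp (t * X ω)) μ := by
  have h := integrable_exp_mul_poissonMeasure r t
  rw [← hlaw] at h
  exact h.comp_measurable hX

lemma mgf_of_map_eq_poissonMeasure {X : Ω → ℕ} (hX : Measurable X) {r : ℝ≥0}
    (hlaw : μ.map X = poissonMeasure r) (t : ℝ) :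
    mgf (fun ω ↦ (X ω : ℝ)) μ t = exp (r * (exp t - 1)) := by
  rw [mgf, ← integral_exp_mul_poissonMeasure r t, ← hlaw,
    integral_map hX.aemeasurable (by fun_prop)]

lemma measureReal_sum_ge_le_of_poisson {ι : Type*} {Z : ι → Ω → ℕ} (hmeas : ∀ i, Measurable (Z i))
    (hindep : iIndepFun Z μ) {s : Finset ι} {r : ι → ℝ≥0}
    (hlaw : ∀ i ∈ s, μ.map (Z i) = poissonMeasure (r i)) {t : ℝ} (ht : 0 ≤ t) (ε : ℝ) :
    μ.real {ω | ε ≤ ∑ i ∈ s, (Z i ω : ℝ)} ≤ exp (-t * ε + (exp t - 1) * ∑ i ∈ s, (r i : ℝ)) := by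
  have := hindep.isProbabilityMeasure
  set X : ι → Ω → ℝ := fun i ω ↦ Z i ω
  have hXmeas : ∀ i, Measurable (X i) := fun i ↦ measurable_from_top.comp (hmeas i)
  have hXindep : iIndepFun X μ := hindep.comp _ fun _ ↦ measurable_from_top
  have hint := hXindep.integrable_exp_mul_sum (t := t) hXmeas
    fun i hi ↦ integrable_exp_mul_of_map_eq_poissonMeasure (hmeas i) (hlaw i hi) t
  calc μ.real {ω | ε ≤ ∑ i ∈ s, (Z i ω : ℝ)}
      ≤ exp (-t * ε) * mgf (∑ i ∈ s, X i) μ t := by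
        convert measure_ge_le_exp_mul_mgf ε ht hint using 4
        simp [X]
    _ = exp (-t * ε + (exp t - 1) * ∑ i ∈ s, (r i : ℝ)) := by
        rw [hXindep.mgf_sum hXmeas, prod_congr rfl fun i hi ↦
          mgf_of_map_eq_poissonMeasure (hmeas i) (hlaw i hi) t, ← exp_sum, ← exp_add, mul_sum]
        simp only [mul_comm]

end ProbabilityTheory

lemma norm_one_sub_ec_le_two (u : ℝ) : ‖1 - ec u‖ ≤ 2 := by
  have h : ‖ec u‖ = 1 := by simp [ec, Complex.norm_exp]
  calc ‖1 - ec u‖ ≤ ‖(1 : ℂ)‖ + ‖ec u‖ := norm_sub_le _ _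
    _ = 2 := by rw [h]; norm_num

lemma coe_mul_elog_le {a x y : ℝ} (ha : 0 ≤ a) (hx : 0 ≤ x) (hxy : x ≤ y) :
    (a : EReal) * elog x ≤ ((a * log y : ℝ) : EReal) := by
  rcases hx.eq_or_lt with rfl | hx
  · rcases ha.eq_or_lt with rfl | ha
    · simp [elog]
    · simp [elog, EReal.coe_mul_bot_of_pos ha]
  · rw [elog, if_neg hx.ne', ← EReal.coe_mul, EReal.coe_le_coe_iff]
    exact mul_le_mul_of_nonneg_left (log_le_log hx hxy) ha

lemma Yfield_le_log_two_mul_sum (J : Finset ℕ) (Zω : ℕ → ℕ) (t : ℝ) :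
    Yfield J Zω t ≤ (((∑ ℓ ∈ J, (Zω ℓ : ℝ)) * log 2 : ℝ) : EReal) := by
  rw [sum_mul, EReal.coe_finset_sum]
  exact sum_le_sum fun ℓ _ ↦
    coe_mul_elog_le (Nat.cast_nonneg _) (norm_nonneg _) (norm_one_sub_ec_le_two _)

lemma sum_Icc_floor_inv_le_one_add_log {M : ℝ} (hM : 1 ≤ M) :
    ∑ ℓ ∈ Icc 1 ⌊M⌋₊, (((ℓ : ℝ≥0)⁻¹ : ℝ≥0) : ℝ) ≤ 1 + log M := by
  calc ∑ ℓ ∈ Icc 1 ⌊M⌋₊, (((ℓ : ℝ≥0)⁻¹ : ℝ≥0) : ℝ) = harmonic ⌊M⌋₊ := by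
        rw [harmonic_eq_sum_Icc]; push_cast; rfl
    _ ≤ 1 + log M := harmonic_floor_le_one_add_log M hM

lemma measureReal_three_log_le_sum_mul_log_two_le {Ω : Type*} [MeasurableSpace Ω]
    {μ : Measure Ω} {Z : ℕ → Ω → ℕ} (hmeas : ∀ ℓ, Measurable (Z ℓ)) (hindep : iIndepFun Z μ)
    {M : ℝ} (hM : 1 ≤ M) (hlaw : ∀ ℓ ∈ Icc 1 ⌊M⌋₊, μ.map (Z ℓ) = poissonMeasure (ℓ : ℝ≥0)⁻¹) :
    μ.real {ω | 3 * log M ≤ (∑ ℓ ∈ Icc 1 ⌊M⌋₊, (Z ℓ ω : ℝ)) * log 2} ≤ exp 1 * M ^ (-2 : ℝ) := by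
  have hlog2 : 0 < log 2 := log_pos one_lt_two
  have hevent : {ω | 3 * log M ≤ (∑ ℓ ∈ Icc 1 ⌊M⌋₊, (Z ℓ ω : ℝ)) * log 2} =
      {ω | 3 * log M / log 2 ≤ ∑ ℓ ∈ Icc 1 ⌊M⌋₊, (Z ℓ ω : ℝ)} := by
    ext ω; exact (div_le_iff₀ hlog2).symm
  calc μ.real {ω | 3 * log M ≤ (∑ ℓ ∈ Icc 1 ⌊M⌋₊, (Z ℓ ω : ℝ)) * log 2}
      ≤ exp (-log 2 * (3 * log M / log 2) +
          (exp (log 2) - 1) * ∑ ℓ ∈ Icc 1 ⌊M⌋₊, (((ℓ : ℝ≥0)⁻¹ : ℝ≥0) : ℝ)) := by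
        rw [hevent]
        exact measureReal_sum_ge_le_of_poisson hmeas hindep hlaw hlog2.le _
    _ ≤ exp (-3 * log M + (1 + log M)) := by
        rw [exp_log two_pos, neg_mul, mul_div_cancel₀ _ hlog2.ne']
        refine exp_le_exp.2 ?_
        linarith [sum_Icc_floor_inv_le_one_add_log hM]
    _ = exp 1 * M ^ (-2 : ℝ) := by
        rw [rpow_def_of_pos (one_pos.trans_le hM), ← exp_add]
        ring_nf

/-- crude uniform upper bound for the Poisson field,
`sup_{t ∈ [0,1)} Σ_{1 ≤ ℓ ≤ M} Z_ℓ log|1 - e(ℓt)| ≤ 3 log M`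
with probability at least `1 - C M^{-c}`. -/
theorem poisson_field_crude_upper_bound :
    ∃ c C : ℝ, 0 < c ∧ 0 < C ∧
      ∀ (Ω : Type) (_ : MeasurableSpace Ω) (μ : Measure Ω), IsProbabilityMeasure μ →
      ∀ (Z : ℕ → Ω → ℕ),
        (∀ ℓ, Measurable (Z ℓ)) →
        iIndepFun Z μ →
        (∀ ℓ : ℕ, 1 ≤ ℓ → Measure.map (Z ℓ) μ = ((poissonPMF ((ℓ : NNReal)⁻¹)).toMeasure)) →
      ∀ M : ℝ, 1 ≤ M →
        ENNReal.ofReal (1 - C * M ^ (-c)) ≤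
          μ {ω | (⨆ t : Set.Ico (0:ℝ) 1,
                    Yfield (Finset.Icc 1 ⌊M⌋₊) (fun ℓ => Z ℓ ω) (t : ℝ))
                  ≤ ((3 * Real.log M : ℝ) : EReal)} := by
  refine ⟨2, exp 1, two_pos, exp_pos 1, ?_⟩
  intro Ω _ μ _ Z hmeas hindep hlaw M hM
  set A := {ω | 3 * log M ≤ (∑ ℓ ∈ Icc 1 ⌊M⌋₊, (Z ℓ ω : ℝ)) * log 2}
  have htail : μ.real A ≤ exp 1 * M ^ (-2 : ℝ) :=
    measureReal_three_log_le_sum_mul_log_two_le hmeas hindep hM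
      fun ℓ hℓ ↦ (hlaw ℓ (mem_Icc.1 hℓ).1).trans (toMeasure_poissonPMF _)
  have hA : MeasurableSet A := measurableSet_le measurable_const (by fun_prop)
  calc ENNReal.ofReal (1 - exp 1 * M ^ (-2 : ℝ))
      ≤ ENNReal.ofReal (μ.real Aᶜ) := by
        rw [probReal_compl_eq_one_sub hA]
        gcongr
    _ = μ Aᶜ := ofReal_measureReal
    _ ≤ _ := measure_mono fun ω hω ↦ iSup_le fun t ↦
        (Yfield_le_log_two_mul_sum _ _ _).trans (EReal.coe_le_coe_iff.2 (le_of_lt (not_le.1 hω)))
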